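/- Let A be a real symmetric n×n matrix, b ∈ ℝⁿ, M a real symmetric positive definite n×n matrix, c ∈ ℝ, κ > 0, and δ > 0. Define the (n+1)×(n+1) matrices A₁ = (1/(2κ))·[[−c, bᵀ],[b, A]] and A₂ = (1/(2κ))·[[1, 0],[0, −M]]. Suppose there exists a positive semidefinite matrix X of size (n+1)×(n+1) with tr(X) ≤ 1, A₁ • X ≥ δ, and A₂ • X ≥ δ. Then there exists a vector x ∈ ℝⁿ such that xᵀ A x + 2 bᵀ x ≥ c and xᵀ M x ≤ 1. -/

import Mathlib

open Matrix BigOperators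

noncomputable def frob {m : Type*} [Fintype m] (A X : Matrix m m ℝ) : ℝ :=
  (Aᵀ * X).trace

/-- The block matrix `A₁ = (1/(2κ))·[[−c, bᵀ],[b, A]]`. -/
noncomputable def A1mat {n : ℕ} (A : Matrix (Fin n) (Fin n) ℝ) (b : Fin n → ℝ)
    (c κ : ℝ) : Matrix (Unit ⊕ Fin n) (Unit ⊕ Fin n) ℝ :=
  (2 * κ)⁻¹ • Matrix.fromBlocks (Matrix.of fun _ _ => -c) (Matrix.of fun _ j => b j)
      (Matrix.of fun i _ => b i) A

/-- The block matrix `A₂ = (1/(2κ))·[[1, 0],[0, −M]]`. -/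
noncomputable def A2mat {n : ℕ} (M : Matrix (Fin n) (Fin n) ℝ)
    (κ : ℝ) : Matrix (Unit ⊕ Fin n) (Unit ⊕ Fin n) ℝ :=
  (2 * κ)⁻¹ • Matrix.fromBlocks (Matrix.of fun _ _ => (1 : ℝ)) 0 0 (-M)

/-!
Write a feasible `X` as `t • [[1, xᵀ], [x, W]]` with `t > 0` (forced by `A₂ • X > 0`). The Schur
complement `Z = W - x xᵀ` is positive semidefinite, and with `q(y) = yᵀ A y + 2 bᵀ y` the two
strict inequalities read `q(x) - c + A • Z > 0` and `xᵀ M x + M • Z < 1`. If `q(x) ≥ c`, `x` itself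
is feasible. Otherwise `D = q(x) - c < 0`, `G = 1 - xᵀ M x > M • Z`, and `(G A + D M) • Z > 0`, so
some rank-one piece `u uᵀ` of `Z` has `G uᵀAu + D uᵀMu > 0`. On the line `x + s u` the quantity
`uᵀMu (q - c) - uᵀAu (yᵀ M y - 1)` is affine in `s`; flipping `u` if necessary so that it is
nondecreasing and stopping where the line leaves the ellipsoid `yᵀ M y ≤ 1` gives a feasible point.
-/

section Frobenius

variable {ι : Type*} [Fintype ι]

lemma frob_eq_sum (A X : Matrix ι ι ℝ) : frob A X = ∑ i, ∑ j, A i j * X i j := by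
  simp only [frob, trace, diag_apply, mul_apply, transpose_apply]
  exact Finset.sum_comm

lemma frob_smul_right (A X : Matrix ι ι ℝ) (a : ℝ) : frob A (a • X) = a * frob A X := by
  simp only [frob, Matrix.mul_smul, trace_smul, smul_eq_mul]

lemma frob_sub_right (A X Y : Matrix ι ι ℝ) : frob A (X - Y) = frob A X - frob A Y := by
  simp only [frob, Matrix.mul_sub, trace_sub]

lemma frob_sum_right {κ : Type*} (A : Matrix ι ι ℝ) (s : Finset κ) (X : κ → Matrix ι ι ℝ) :
    frob A (∑ k ∈ s, X k) = ∑ k ∈ s, frob A (X k) := by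
  simp only [frob, Matrix.mul_sum, trace_sum]

lemma frob_vecMulVec (A : Matrix ι ι ℝ) (v : ι → ℝ) :
    frob A (vecMulVec v v) = v ⬝ᵥ A *ᵥ v := by
  simp only [frob_eq_sum, vecMulVec_apply, dotProduct, mulVec, Finset.mul_sum]
  exact Finset.sum_congr rfl fun i _ => Finset.sum_congr rfl fun j _ => by ring

lemma frob_add_left (A B X : Matrix ι ι ℝ) :
    frob (A + B) X = frob A X + frob B X := by
  simp only [frob, transpose_add, Matrix.add_mul, trace_add]

lemma frob_smul_left (a : ℝ) (A X : Matrix ι ι ℝ) :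
    frob (a • A) X = a * frob A X := by
  simp only [frob, transpose_smul, Matrix.smul_mul, trace_smul, smul_eq_mul]

lemma Matrix.PosSemidef.exists_frob_eq_sum {Z : Matrix ι ι ℝ} (hZ : Z.PosSemidef) :
    ∃ (m : ℕ) (v : Fin m → ι → ℝ), ∀ A, frob A Z = ∑ k, v k ⬝ᵥ A *ᵥ v k := by
  obtain ⟨m, v, rfl⟩ := posSemidef_iff_eq_sum_vecMulVec.mp hZ
  exact ⟨m, v, fun A => by simp only [star_trivial, frob_sum_right, frob_vecMulVec]⟩

lemma Matrix.PosSemidef.frob_nonneg {A Z : Matrix ι ι ℝ} (hA : A.PosSemidef)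
    (hZ : Z.PosSemidef) : 0 ≤ frob A Z := by
  obtain ⟨m, v, hv⟩ := hZ.exists_frob_eq_sum
  rw [hv]
  exact Finset.sum_nonneg fun k _ => by simpa using hA.dotProduct_mulVec_nonneg (v k)

lemma Matrix.PosSemidef.exists_dotProduct_mulVec_pos_of_frob_pos {A Z : Matrix ι ι ℝ}
    (hZ : Z.PosSemidef) (h : 0 < frob A Z) : ∃ u, 0 < u ⬝ᵥ A *ᵥ u := by
  obtain ⟨m, v, hv⟩ := hZ.exists_frob_eq_sum
  rw [hv] at h
  obtain ⟨k, -, hk⟩ := Finset.exists_lt_of_sum_lt (s := Finset.univ) (f := fun _ => (0 : ℝ))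
    (by simpa using h)
  exact ⟨v k, hk⟩

end Frobenius

lemma exists_nonneg_quadratic_eq_zero {a b c : ℝ} (ha : 0 < a) (hc : c ≤ 0) :
    ∃ s, 0 ≤ s ∧ a * s ^ 2 + b * s + c = 0 := by
  have hdisc : 0 ≤ b ^ 2 - 4 * a * c := by nlinarith
  set d := Real.sqrt (b ^ 2 - 4 * a * c)
  have hd : d ^ 2 = b ^ 2 - 4 * a * c := Real.sq_sqrt hdisc
  have hbd : b ≤ d := Real.le_sqrt_of_sq_le (by nlinarith)
  refine ⟨(-b + d) / (2 * a), div_nonneg (by linarith) (by positivity), ?_⟩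
  field_simp
  linear_combination hd

lemma dotProduct_mulVec_add_smul {ι : Type*} [Fintype ι] (A : Matrix ι ι ℝ) (x u : ι → ℝ)
    (s : ℝ) :
    (x + s • u) ⬝ᵥ A *ᵥ (x + s • u)
      = x ⬝ᵥ A *ᵥ x + s * (x ⬝ᵥ A *ᵥ u + u ⬝ᵥ A *ᵥ x) + s ^ 2 * (u ⬝ᵥ A *ᵥ u) := by
  simp only [mulVec_add, mulVec_smul, dotProduct_add, add_dotProduct, dotProduct_smul,
    smul_dotProduct, smul_eq_mul]
  ring

section TrustRegion

variable {ι : Type*} [Fintype ι] (A M : Matrix ι ι ℝ) (b : ι → ℝ) (c : ℝ)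

lemma exists_feasible_on_line (x u : ι → ℝ) (hμ : 0 < u ⬝ᵥ M *ᵥ u)
    (hx : x ⬝ᵥ M *ᵥ x ≤ 1)
    (h : 0 ≤ (u ⬝ᵥ M *ᵥ u) * (x ⬝ᵥ A *ᵥ x + 2 * (b ⬝ᵥ x) - c)
      + (u ⬝ᵥ A *ᵥ u) * (1 - x ⬝ᵥ M *ᵥ x)) :
    ∃ y, c ≤ y ⬝ᵥ A *ᵥ y + 2 * (b ⬝ᵥ y) ∧ y ⬝ᵥ M *ᵥ y ≤ 1 := by
  wlog hL : 0 ≤ (u ⬝ᵥ M *ᵥ u) * (x ⬝ᵥ A *ᵥ u + u ⬝ᵥ A *ᵥ x + 2 * (b ⬝ᵥ u))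
      - (u ⬝ᵥ A *ᵥ u) * (x ⬝ᵥ M *ᵥ u + u ⬝ᵥ M *ᵥ x) generalizing u
  · refine this (-u) ?_ ?_ ?_ <;>
      simp only [mulVec_neg, dotProduct_neg, neg_dotProduct, neg_neg] <;> linarith
  obtain ⟨s, hs, hroot⟩ := exists_nonneg_quadratic_eq_zero (b := x ⬝ᵥ M *ᵥ u + u ⬝ᵥ M *ᵥ x)
    hμ (sub_nonpos.mpr hx)
  refine ⟨x + s • u, ?_, ?_⟩
  · have key : (u ⬝ᵥ M *ᵥ u) * ((x + s • u) ⬝ᵥ A *ᵥ (x + s • u) + 2 * (b ⬝ᵥ (x + s • u)) - c)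
        = (u ⬝ᵥ M *ᵥ u) * (x ⬝ᵥ A *ᵥ x + 2 * (b ⬝ᵥ x) - c)
          + (u ⬝ᵥ A *ᵥ u) * (1 - x ⬝ᵥ M *ᵥ x)
          + s * ((u ⬝ᵥ M *ᵥ u) * (x ⬝ᵥ A *ᵥ u + u ⬝ᵥ A *ᵥ x + 2 * (b ⬝ᵥ u))
            - (u ⬝ᵥ A *ᵥ u) * (x ⬝ᵥ M *ᵥ u + u ⬝ᵥ M *ᵥ x)) := by
      rw [dotProduct_mulVec_add_smul, dotProduct_add, dotProduct_smul, smul_eq_mul]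
      linear_combination (u ⬝ᵥ A *ᵥ u) * hroot
    have := nonneg_of_mul_nonneg_right (key ▸ add_nonneg h (mul_nonneg hs hL)) hμ
    linarith
  · rw [dotProduct_mulVec_add_smul]
    linarith

lemma exists_feasible_of_shor_relaxation (hM : M.PosDef) (x : ι → ℝ) (W : Matrix ι ι ℝ)
    (hW : (W - vecMulVec x x).PosSemidef) (h₁ : c < frob A W + 2 * (b ⬝ᵥ x))
    (h₂ : frob M W < 1) :
    ∃ y, c ≤ y ⬝ᵥ A *ᵥ y + 2 * (b ⬝ᵥ y) ∧ y ⬝ᵥ M *ᵥ y ≤ 1 := by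
  set Z := W - vecMulVec x x
  have hAZ : frob A Z = frob A W - x ⬝ᵥ A *ᵥ x := by rw [frob_sub_right, frob_vecMulVec]
  have hMZ : frob M Z = frob M W - x ⬝ᵥ M *ᵥ x := by rw [frob_sub_right, frob_vecMulVec]
  have hMZ₀ : 0 ≤ frob M Z := hM.posSemidef.frob_nonneg hW
  by_cases hx : c ≤ x ⬝ᵥ A *ᵥ x + 2 * (b ⬝ᵥ x)
  · exact ⟨x, hx, by linarith⟩
  set D := x ⬝ᵥ A *ᵥ x + 2 * (b ⬝ᵥ x) - c
  set G := 1 - x ⬝ᵥ M *ᵥ x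
  have hD : D < 0 := by linarith
  have hG : frob M Z < G := by linarith
  obtain ⟨u, hu⟩ := hW.exists_dotProduct_mulVec_pos_of_frob_pos (A := G • A + D • M) (by
    rw [frob_add_left, frob_smul_left, frob_smul_left]
    nlinarith [mul_lt_mul_of_pos_left (show -D < frob A Z by linarith) (hMZ₀.trans_lt hG)])
  simp only [add_mulVec, smul_mulVec, dotProduct_add, dotProduct_smul, smul_eq_mul] at hu
  have hμ : 0 < u ⬝ᵥ M *ᵥ u := by
    refine hM.dotProduct_mulVec_pos (x := u) ?_
    rintro rfl
    simp at hu
  exact exists_feasible_on_line A M b c x u hμ (by linarith)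
    (by linarith [mul_comm G (u ⬝ᵥ A *ᵥ u), mul_comm D (u ⬝ᵥ M *ᵥ u)])

end TrustRegion

section MomentMatrix

variable {ι : Type*}

def momentMatrix (x : ι → ℝ) (W : Matrix ι ι ℝ) : Matrix (Unit ⊕ ι) (Unit ⊕ ι) ℝ :=
  fromBlocks 1 (replicateRow Unit x) (replicateCol Unit x) W

lemma posSemidef_momentMatrix_iff [Fintype ι] (x : ι → ℝ) (W : Matrix ι ι ℝ) :
    (momentMatrix x W).PosSemidef ↔ (W - vecMulVec x x).PosSemidef := by
  have : Invertible (1 : Matrix Unit Unit ℝ) := invertibleOne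
  have hSchur := PosDef.fromBlocks₁₁ (replicateRow Unit x) W (PosDef.one (n := Unit) (R := ℝ))
  simpa [momentMatrix, conjTranspose_replicateRow, vecMulVec_eq Unit] using hSchur

lemma Matrix.PosSemidef.exists_eq_smul_momentMatrix {X : Matrix (Unit ⊕ ι) (Unit ⊕ ι) ℝ}
    (hX : X.PosSemidef) (ht : 0 < X (.inl ()) (.inl ())) :
    ∃ x W, (momentMatrix x W).PosSemidef ∧ X = X (.inl ()) (.inl ()) • momentMatrix x W := by
  set t := X (.inl ()) (.inl ())
  set x : ι → ℝ := t⁻¹ • fun i => X (.inr i) (.inl ())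
  set W := t⁻¹ • X.toBlocks₂₂
  have hXW : X = t • momentMatrix x W := by
    ext (_ | i) (_ | j) <;> simp [x, W, momentMatrix, ht.ne']
    · rfl
    · exact (hX.isHermitian.apply _ _).symm
    · rfl
  refine ⟨x, W, ?_, hXW⟩
  have := hX.smul (inv_nonneg.mpr ht.le)
  rwa [hXW, smul_smul, inv_mul_cancel₀ ht.ne', one_smul] at this

end MomentMatrix

section RelaxationMatrices

variable {n : ℕ}

lemma frob_A1mat_momentMatrix (A : Matrix (Fin n) (Fin n) ℝ) (b : Fin n → ℝ) (c κ : ℝ)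
    (x : Fin n → ℝ) (W : Matrix (Fin n) (Fin n) ℝ) :
    frob (A1mat A b c κ) (momentMatrix x W) = (2 * κ)⁻¹ * (frob A W + 2 * (b ⬝ᵥ x) - c) := by
  rw [A1mat, frob_smul_left]
  congr 1
  simp [frob_eq_sum, momentMatrix, Fintype.sum_sum_type, dotProduct, Finset.sum_add_distrib]
  ring

lemma frob_A2mat (M : Matrix (Fin n) (Fin n) ℝ) (κ : ℝ)
    (X : Matrix (Unit ⊕ Fin n) (Unit ⊕ Fin n) ℝ) :
    frob (A2mat M κ) X = (2 * κ)⁻¹ * (X (.inl ()) (.inl ()) - frob M X.toBlocks₂₂) := by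
  rw [A2mat, frob_smul_left]
  congr 1
  simp [frob_eq_sum, Fintype.sum_sum_type, sub_eq_add_neg]
  rfl

lemma frob_A2mat_momentMatrix (M : Matrix (Fin n) (Fin n) ℝ) (κ : ℝ) (x : Fin n → ℝ)
    (W : Matrix (Fin n) (Fin n) ℝ) :
    frob (A2mat M κ) (momentMatrix x W) = (2 * κ)⁻¹ * (1 - frob M W) := by
  simp [frob_A2mat, momentMatrix]

end RelaxationMatrices

theorem sdp_feasible_implies_tr_feasible_general {n : ℕ}
    (A : Matrix (Fin n) (Fin n) ℝ)
    (b : Fin n → ℝ) (M : Matrix (Fin n) (Fin n) ℝ) (hM : M.PosDef)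
    (c κ δ : ℝ) (hκ : 0 < κ) (hδ : 0 < δ)
    (h : ∃ X : Matrix (Unit ⊕ Fin n) (Unit ⊕ Fin n) ℝ,
      X.PosSemidef ∧ X.trace ≤ 1 ∧
        δ ≤ frob (A1mat A b c κ) X ∧ δ ≤ frob (A2mat M κ) X) :
    ∃ x : Fin n → ℝ,
      c ≤ x ⬝ᵥ A.mulVec x + 2 * (b ⬝ᵥ x) ∧ x ⬝ᵥ M.mulVec x ≤ 1 := by
  obtain ⟨X, hX, -, h₁, h₂⟩ := h
  have hκ' : 0 < (2 * κ)⁻¹ := by positivity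
  have ht : 0 < X (.inl ()) (.inl ()) := by
    have hMY : 0 ≤ frob M X.toBlocks₂₂ := hM.posSemidef.frob_nonneg (hX.submatrix Sum.inr)
    rw [frob_A2mat] at h₂
    linarith [pos_of_mul_pos_right (hδ.trans_le h₂) hκ'.le]
  obtain ⟨x, W, hxW, hXxW⟩ := hX.exists_eq_smul_momentMatrix ht
  rw [hXxW, frob_smul_right, frob_A1mat_momentMatrix] at h₁
  rw [hXxW, frob_smul_right, frob_A2mat_momentMatrix] at h₂
  have h₁' := pos_of_mul_pos_right (pos_of_mul_pos_right (hδ.trans_le h₁) ht.le) hκ'.le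
  have h₂' := pos_of_mul_pos_right (pos_of_mul_pos_right (hδ.trans_le h₂) ht.le) hκ'.le
  exact exists_feasible_of_shor_relaxation A M b c hM x W
    ((posSemidef_momentMatrix_iff x W).mp hxW) (by linarith) (by linarith)

/-- any strictly feasible SDP solution can be rounded into a feasible
solution of the trust-region feasibility problem. -/
theorem sdp_feasible_implies_tr_feasible {n : ℕ}
    (A : Matrix (Fin n) (Fin n) ℝ) (hA : A.IsSymm)
    (b : Fin n → ℝ) (M : Matrix (Fin n) (Fin n) ℝ) (hM : M.PosDef)
    (c κ δ : ℝ) (hκ : 0 < κ) (hδ : 0 < δ)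
    (h : ∃ X : Matrix (Unit ⊕ Fin n) (Unit ⊕ Fin n) ℝ,
      X.PosSemidef ∧ X.trace ≤ 1 ∧
        δ ≤ frob (A1mat A b c κ) X ∧ δ ≤ frob (A2mat M κ) X) :
    ∃ x : Fin n → ℝ,
      c ≤ x ⬝ᵥ A.mulVec x + 2 * (b ⬝ᵥ x) ∧ x ⬝ᵥ M.mulVec x ≤ 1 :=
  sdp_feasible_implies_tr_feasible_general A b M hM c κ δ hκ hδ h
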